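/- Fix R > 0 and let A ⊆ ℝⁿ be a closed set such that int T_A(z) ≠ ∅ for all z ∈ ∂A ∩ (R+1)𝔹. Then there exist positive numbers β, ε₀, ε₁, …, ε_k, points z₁, …, z_k ∈ ∂A ∩ (R+1)𝔹, and vectors ζ_j ∈ int T_A(z_j) for j = 1, …, k, such that: (i) ⋃_{j=1}^k (z_j + (ε_j/2) int 𝔹) ⊇ (∂A + ε₀𝔹) ∩ (R+1)𝔹; and (ii) for every j = 1, …, k, ζ_j · η < −β for all η ∈ co(N_A(z) ∩ ∂𝔹) and all z ∈ (z_j + ε_j𝔹) ∩ ∂A. -/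

import Mathlib

open Set Filter Topology Metric Pointwise
open scoped RealInnerProductSpace

noncomputable section

variable {H : Type*} [NormedAddCommGroup H] [InnerProductSpace ℝ H]

/-- The Clarke tangent cone to `A` at `x`. -/
def clarkeTangentCone (A : Set H) (x : H) : Set H :=
  {ξ | ∀ (xs : ℕ → H) (ts : ℕ → ℝ), (∀ i, xs i ∈ A) → Tendsto xs atTop (𝓝 x) →
      (∀ i, 0 < ts i) → Tendsto ts atTop (𝓝 0) →
      ∃ as : ℕ → H, (∀ i, as i ∈ A) ∧
        Tendsto (fun i => (ts i)⁻¹ • (as i - xs i)) atTop (𝓝 ξ)}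

/-- The proximal normal cone to `A` at `x`. -/
def proxNormalCone (A : Set H) (x : H) : Set H :=
  {η | ∃ M > 0, ∀ y ∈ A, ⟪η, y - x⟫ ≤ M * ‖y - x‖ ^ 2}

/-- The limiting normal cone to `A` at `x`. -/
def limitingNormalCone (A : Set H) (x : H) : Set H :=
  {η | ∃ xs ηs : ℕ → H, (∀ i, xs i ∈ A) ∧ (∀ i, ηs i ∈ proxNormalCone A (xs i)) ∧
    Tendsto xs atTop (𝓝 x) ∧ Tendsto ηs atTop (𝓝 η)}

/-!
An interior vector `ζ` of the Clarke tangent cone at `z`, with `closedBall ζ δ ⊆ T_A(z)`,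
satisfies `⟪ζ, η⟫ ≤ -δ` for every unit limiting normal `η` at `z`, by the polarity
`⟪T_A(z), N_A(z)⟫ ≤ 0`. Compactness of the unit sphere propagates the weaker bound `-δ/2` to
unit proximal, hence limiting, normals at all points near `z`, and a half-space bound survives
convex combinations. Compactness of `∂A ∩ (R+1)𝔹` selects finitely many such points; the part
of `(R+1)𝔹` not covered by their balls is compact and disjoint from `∂A`, hence at positive
distance `ε₀` from it.
-/

theorem smul_mem_proxNormalCone {A : Set H} {x η : H} {c : ℝ} (hc : 0 < c)
    (hη : η ∈ proxNormalCone A x) : c • η ∈ proxNormalCone A x := by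
  obtain ⟨M, hM, hineq⟩ := hη
  refine ⟨c * M, by positivity, fun y hy => ?_⟩
  rw [real_inner_smul_left, mul_assoc]
  exact mul_le_mul_of_nonneg_left (hineq y hy) hc.le

theorem inner_inv_smul_sub_le_of_proxNormal {A : Set H} {x η a : H} {M t : ℝ}
    (hM : ∀ y ∈ A, ⟪η, y - x⟫ ≤ M * ‖y - x‖ ^ 2) (ha : a ∈ A) (ht : 0 < t) :
    ⟪η, t⁻¹ • (a - x)⟫ ≤ M * t * ‖t⁻¹ • (a - x)‖ ^ 2 := by
  calc ⟪η, t⁻¹ • (a - x)⟫ = t⁻¹ * ⟪η, a - x⟫ := real_inner_smul_right _ _ _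
    _ ≤ t⁻¹ * (M * ‖a - x‖ ^ 2) := by gcongr; exact hM a ha
    _ = M * t * ‖t⁻¹ • (a - x)‖ ^ 2 := by
      rw [norm_smul, Real.norm_eq_abs, abs_of_pos (inv_pos.2 ht)]
      field_simp

theorem inner_nonpos_of_mem_clarkeTangentCone_of_mem_limitingNormalCone {A : Set H} {z ξ η : H}
    (hξ : ξ ∈ clarkeTangentCone A z) (hη : η ∈ limitingNormalCone A z) : ⟪ξ, η⟫ ≤ 0 := by
  obtain ⟨xs, ηs, hxsA, hηs, hxs, hηs_lim⟩ := hη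
  choose M hM hMη using hηs
  -- steps so short that the proximal constants are absorbed: `M i * ts i ≤ (i + 1)⁻¹`
  set ts : ℕ → ℝ := fun i => ((i : ℝ) + 1)⁻¹ * (M i + 1)⁻¹
  have hts : ∀ i, 0 < ts i := fun i => by have := hM i; positivity
  have hMts : ∀ i, M i * ts i ≤ ((i : ℝ) + 1)⁻¹ := fun i => by
    have := hM i
    calc M i * ts i = (M i / (M i + 1)) * ((i : ℝ) + 1)⁻¹ := by ring
      _ ≤ ((i : ℝ) + 1)⁻¹ :=
        mul_le_of_le_one_left (by positivity) ((div_le_one (by positivity)).2 (by linarith))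
  have hts_le : ∀ i, ts i ≤ ((i : ℝ) + 1)⁻¹ := fun i =>
    mul_le_of_le_one_right (by positivity) (inv_le_one_of_one_le₀ (by linarith [hM i]))
  have hinv : Tendsto (fun i : ℕ => ((i : ℝ) + 1)⁻¹) atTop (𝓝 0) := by
    simpa [one_div] using tendsto_one_div_add_atTop_nhds_zero_nat (𝕜 := ℝ)
  obtain ⟨as, has, hv⟩ :=
    hξ xs ts hxsA hxs hts (squeeze_zero (fun i => (hts i).le) hts_le hinv)
  have hbound : ∀ i, ⟪ηs i, (ts i)⁻¹ • (as i - xs i)⟫ ≤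
      ((i : ℝ) + 1)⁻¹ * ‖(ts i)⁻¹ • (as i - xs i)‖ ^ 2 := fun i =>
    (inner_inv_smul_sub_le_of_proxNormal (hMη i) (has i) (hts i)).trans
      (mul_le_mul_of_nonneg_right (hMts i) (sq_nonneg _))
  rw [real_inner_comm]
  exact le_of_tendsto_of_tendsto' (hηs_lim.inner hv) (by simpa using hinv.mul (hv.norm.pow 2))
    hbound

theorem inner_le_neg_mul_norm_of_closedBall_subset_clarkeTangentCone {A : Set H} {z ζ η : H}
    {δ : ℝ} (hδ : 0 ≤ δ) (hball : closedBall ζ δ ⊆ clarkeTangentCone A z)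
    (hη : η ∈ limitingNormalCone A z) : ⟪ζ, η⟫ ≤ -(δ * ‖η‖) := by
  rcases eq_or_ne η 0 with rfl | hη0
  · simp
  have hpos : 0 < ‖η‖ := norm_pos_iff.2 hη0
  have hmem : ζ + (δ / ‖η‖) • η ∈ closedBall ζ δ := by
    rw [mem_closedBall, dist_eq_norm, add_sub_cancel_left, norm_smul, Real.norm_eq_abs,
      abs_of_nonneg (by positivity), div_mul_cancel₀ _ hpos.ne']
  have hpolar := inner_nonpos_of_mem_clarkeTangentCone_of_mem_limitingNormalCone (hball hmem) hη
  rw [inner_add_left, real_inner_smul_left, real_inner_self_eq_norm_sq] at hpolar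
  have : δ / ‖η‖ * ‖η‖ ^ 2 = δ * ‖η‖ := by field_simp
  linarith

theorem eventually_inner_le_of_mem_proxNormalCone [ProperSpace H] {A : Set H} {z ζ : H}
    {δ : ℝ} (hδ : 0 < δ) (hball : closedBall ζ δ ⊆ clarkeTangentCone A z) :
    ∀ᶠ x in 𝓝 z, x ∈ A → ∀ η ∈ proxNormalCone A x, ⟪ζ, η⟫ ≤ -(δ / 2 * ‖η‖) := by
  by_contra h
  obtain ⟨xs, hxs, hbad⟩ := exists_seq_forall_of_frequently (not_eventually.1 h)
  push Not at hbad
  choose hxsA ηs hηs hlt using hbad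
  have hpos : ∀ i, 0 < ‖ηs i‖ := fun i => norm_pos_iff.2 fun h0 => by
    have := hlt i
    simp [h0] at this
  set us : ℕ → H := fun i => ‖ηs i‖⁻¹ • ηs i
  have hus : ∀ i, us i ∈ sphere (0 : H) 1 := fun i => by
    rw [mem_sphere_zero_iff_norm, norm_smul, norm_inv, norm_norm, inv_mul_cancel₀ (hpos i).ne']
  have hus_lt : ∀ i, -(δ / 2) < ⟪ζ, us i⟫ := fun i => by
    rw [real_inner_smul_right, lt_inv_mul_iff₀ (hpos i)]
    linarith [hlt i]
  obtain ⟨u, hu, φ, hφ, hlim⟩ := (isCompact_sphere (0 : H) 1).tendsto_subseq hus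
  have hu_normal : u ∈ limitingNormalCone A z :=
    ⟨xs ∘ φ, us ∘ φ, fun i => hxsA (φ i),
      fun i => smul_mem_proxNormalCone (inv_pos.2 (hpos (φ i))) (hηs (φ i)),
      hxs.comp hφ.tendsto_atTop, hlim⟩
  have hupper :=
    inner_le_neg_mul_norm_of_closedBall_subset_clarkeTangentCone hδ.le hball hu_normal
  have hlower : -(δ / 2) ≤ ⟪ζ, u⟫ :=
    ge_of_tendsto (tendsto_const_nhds.inner hlim) (Eventually.of_forall fun i => (hus_lt (φ i)).le)
  rw [mem_sphere_zero_iff_norm.1 hu] at hupper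
  linarith

theorem eventually_inner_le_of_mem_limitingNormalCone [ProperSpace H] {A : Set H} {z ζ : H}
    {δ : ℝ} (hδ : 0 < δ) (hball : closedBall ζ δ ⊆ clarkeTangentCone A z) :
    ∀ᶠ z' in 𝓝 z, ∀ η ∈ limitingNormalCone A z', ⟪ζ, η⟫ ≤ -(δ / 2 * ‖η‖) := by
  filter_upwards [eventually_eventually_nhds.2 (eventually_inner_le_of_mem_proxNormalCone hδ hball)]
    with z' hz' η ⟨xs, ηs, hxsA, hηs, hxs, hlim⟩
  have hev : ∀ᶠ i in atTop, ⟪ζ, ηs i⟫ ≤ -(δ / 2 * ‖ηs i‖) :=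
    (hxs.eventually hz').mono fun i hi => hi (hxsA i) (ηs i) (hηs i)
  exact le_of_tendsto_of_tendsto (tendsto_const_nhds.inner hlim)
    (hlim.norm.const_mul _).neg hev

theorem inner_le_of_mem_convexHull {s : Set H} {ζ : H} {c : ℝ} (h : ∀ η ∈ s, ⟪ζ, η⟫ ≤ c) :
    ∀ η ∈ convexHull ℝ s, ⟪ζ, η⟫ ≤ c :=
  convexHull_min h (convex_halfSpace_le (innerₛₗ ℝ ζ).isLinear c)

theorem exists_inner_convexHull_lt_neg_of_mem_interior_clarkeTangentCone [ProperSpace H]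
    {A : Set H} {z ζ : H} (hζ : ζ ∈ interior (clarkeTangentCone A z)) :
    ∃ ε > 0, ∃ β > 0, ∀ z' ∈ closedBall z ε,
      ∀ η ∈ convexHull ℝ (limitingNormalCone A z' ∩ sphere (0 : H) 1), ⟪ζ, η⟫ < -β := by
  obtain ⟨δ, hδ, hball⟩ := nhds_basis_closedBall.mem_iff.1 (mem_interior_iff_mem_nhds.1 hζ)
  obtain ⟨ε, hε, hnear⟩ := nhds_basis_closedBall.eventually_iff.1
    (eventually_inner_le_of_mem_limitingNormalCone hδ hball)
  refine ⟨ε, hε, δ / 4, by positivity, fun z' hz' η hη => ?_⟩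
  have : ⟪ζ, η⟫ ≤ -(δ / 2) := inner_le_of_mem_convexHull (fun η' hη' => by
    simpa [mem_sphere_zero_iff_norm.1 hη'.2] using hnear hz' η' hη'.1) η hη
  linarith

theorem exists_add_closedBall_inter_subset {E : Type*} [SeminormedAddCommGroup E]
    {F B U : Set E} (hF : IsClosed F) (hB : IsCompact B) (hU : IsOpen U) (hFB : F ∩ B ⊆ U) :
    ∃ ε₀ > 0, (F + closedBall 0 ε₀) ∩ B ⊆ U := by
  have hdisj : Disjoint (B \ U) F :=
    disjoint_left.2 fun y hy hyF => hy.2 (hFB ⟨hyF, hy.1⟩)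
  obtain ⟨ε₀, hε₀, hsep⟩ := hdisj.exists_cthickenings (hB.diff hU) hF
  refine ⟨ε₀, hε₀, ?_⟩
  rintro _ ⟨⟨a, ha, b, hb, rfl⟩, hB'⟩
  by_contra hU'
  refine disjoint_left.1 hsep (self_subset_cthickening _ ⟨hB', hU'⟩)
    (mem_cthickening_of_dist_le _ a _ _ ha ?_)
  simpa [dist_eq_norm] using hb

theorem exists_pos_forall_le_of_finite {ι : Type*} [Finite ι] {f : ι → ℝ} (hf : ∀ i, 0 < f i) :
    ∃ b > 0, ∀ i, b ≤ f i :=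
  ((eventually_mem_nhdsWithin (a := (0 : ℝ)) (s := Ioi 0)).and (eventually_all.2 fun i =>
    nhdsWithin_le_nhds (eventually_le_nhds (hf i)))).exists

theorem finite_cover_of_interior_clarkeTangentCone_nonempty_general
    {n : ℕ} (R : ℝ) (A : Set (EuclideanSpace ℝ (Fin n)))
    (hCQ : ∀ z ∈ frontier A ∩ closedBall (0 : EuclideanSpace ℝ (Fin n)) (R + 1),
      (interior (clarkeTangentCone A z)).Nonempty) :
    ∃ (k : ℕ) (β ε₀ : ℝ) (ε : Fin k → ℝ) (zs ζ : Fin k → EuclideanSpace ℝ (Fin n)),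
      0 < β ∧ 0 < ε₀ ∧ (∀ j, 0 < ε j) ∧
      (∀ j, zs j ∈ frontier A ∩ closedBall (0 : EuclideanSpace ℝ (Fin n)) (R + 1)) ∧
      (∀ j, ζ j ∈ interior (clarkeTangentCone A (zs j))) ∧
      ((frontier A + closedBall (0 : EuclideanSpace ℝ (Fin n)) ε₀) ∩
          closedBall (0 : EuclideanSpace ℝ (Fin n)) (R + 1) ⊆
        ⋃ j, ball (zs j) (ε j / 2)) ∧
      (∀ j, ∀ z ∈ closedBall (zs j) (ε j) ∩ frontier A,
        ∀ η ∈ convexHull ℝ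
          (limitingNormalCone A z ∩ sphere (0 : EuclideanSpace ℝ (Fin n)) 1),
        ⟪ζ j, η⟫ < -β) := by
  set K := frontier A ∩ closedBall (0 : EuclideanSpace ℝ (Fin n)) (R + 1)
  have hK : IsCompact K := (isCompact_closedBall _ _).inter_left isClosed_frontier
  have hlocal : ∀ w ∈ K, ∃ ζ ∈ interior (clarkeTangentCone A w), ∃ ε > 0, ∃ β > 0,
      ∀ z ∈ closedBall w ε, ∀ η ∈ convexHull ℝ
        (limitingNormalCone A z ∩ sphere (0 : EuclideanSpace ℝ (Fin n)) 1), ⟪ζ, η⟫ < -β :=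
    fun w hw => (hCQ w hw).imp fun ζ hζ =>
      ⟨hζ, exists_inner_convexHull_lt_neg_of_mem_interior_clarkeTangentCone hζ⟩
  choose! ζ hζ ε hε β hβ hneg using hlocal
  obtain ⟨t, htK, hKt⟩ := hK.elim_nhds_subcover (fun w => ball w (ε w / 2))
    fun w hw => ball_mem_nhds w (half_pos (hε w hw))
  obtain ⟨k, zs, hzs⟩ := t.finite_toSet.fin_embedding
  have hzsK : ∀ j, zs j ∈ K := fun j => htK _ (hzs ▸ mem_range_self j : zs j ∈ (t : Set _))
  have hKcov : K ⊆ ⋃ j, ball (zs j) (ε (zs j) / 2) := by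
    refine hKt.trans (iUnion₂_subset fun w hw => ?_)
    obtain ⟨j, rfl⟩ : w ∈ range zs := hzs ▸ hw
    exact subset_iUnion (fun j => ball (zs j) (ε (zs j) / 2)) j
  obtain ⟨ε₀, hε₀, hcov⟩ := exists_add_closedBall_inter_subset isClosed_frontier
    (isCompact_closedBall _ _) (isOpen_iUnion fun _ => isOpen_ball) hKcov
  obtain ⟨b, hb, hbβ⟩ := exists_pos_forall_le_of_finite fun j => hβ _ (hzsK j)
  exact ⟨k, b, ε₀, ε ∘ zs, zs, ζ ∘ zs, hb, hε₀, fun j => hε _ (hzsK j), hzsK,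
    fun j => hζ _ (hzsK j), hcov, fun j z hz η hη =>
      (hneg _ (hzsK j) z hz.1 η hη).trans_le (neg_le_neg (hbβ j))⟩

/-- Lemma 2: if `int T_A(z) ≠ ∅` for every `z ∈ ∂A ∩ (R+1)𝔹`, then there are finitely
many points `z_j ∈ ∂A ∩ (R+1)𝔹`, radii `ε_j > 0`, vectors `ζ_j ∈ int T_A(z_j)`, and
constants `β, ε₀ > 0`, such that the balls `z_j + (ε_j/2) int 𝔹` cover
`(∂A + ε₀ 𝔹) ∩ (R+1)𝔹` and `ζ_j · η < -β` for every unit limiting normal direction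
`η ∈ co (N_A(z) ∩ ∂𝔹)` at every `z ∈ (z_j + ε_j 𝔹) ∩ ∂A`. -/
theorem finite_cover_of_interior_clarkeTangentCone_nonempty
    {n : ℕ} (R : ℝ) (hR : 0 < R) (A : Set (EuclideanSpace ℝ (Fin n))) (hA : IsClosed A)
    (hCQ : ∀ z ∈ frontier A ∩ closedBall (0 : EuclideanSpace ℝ (Fin n)) (R + 1),
      (interior (clarkeTangentCone A z)).Nonempty) :
    ∃ (k : ℕ) (β ε₀ : ℝ) (ε : Fin k → ℝ) (zs ζ : Fin k → EuclideanSpace ℝ (Fin n)),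
      0 < β ∧ 0 < ε₀ ∧ (∀ j, 0 < ε j) ∧
      (∀ j, zs j ∈ frontier A ∩ closedBall (0 : EuclideanSpace ℝ (Fin n)) (R + 1)) ∧
      (∀ j, ζ j ∈ interior (clarkeTangentCone A (zs j))) ∧
      ((frontier A + closedBall (0 : EuclideanSpace ℝ (Fin n)) ε₀) ∩
          closedBall (0 : EuclideanSpace ℝ (Fin n)) (R + 1) ⊆
        ⋃ j, ball (zs j) (ε j / 2)) ∧
      (∀ j, ∀ z ∈ closedBall (zs j) (ε j) ∩ frontier A,
        ∀ η ∈ convexHull ℝ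
          (limitingNormalCone A z ∩ sphere (0 : EuclideanSpace ℝ (Fin n)) 1),
        ⟪ζ j, η⟫ < -β) :=
  finite_cover_of_interior_clarkeTangentCone_nonempty_general R A hCQ
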